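/- arXiv:2005.05016 — 2 statements merged into one kernel-verified Lean document; each statement's English description precedes it below -/
import Mathlib

section
/- Let V be a finite-dimensional real inner product space with dim V ≥ 2, and let A, B, H be symmetric endomorphisms of V such that A is not a scalar multiple of the identity. If ⟨AX,Y⟩·B + ⟨BX,Y⟩·A + ⟨X,Y⟩·H + ⟨HX,Y⟩·id = 0 (as endomorphisms of V) for all X, Y ∈ V, then there exists b ∈ ℝ such that B = b·id. -/
/-!
Since `A` is not a homothety, some `X` has `A X ∉ ℝ ∙ X`, so there is `Y ⊥ X` with
`⟪A X, Y⟫ ≠ 0`. At this pair the `H`-term drops out and the identity reads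
`⟪A X, Y⟫ • B + ⟪B X, Y⟫ • A + ⟪H X, Y⟫ • id = 0`. Pairing its value at `X` with `Y` gives
`2 ⟪A X, Y⟫ ⟪B X, Y⟫ = 0`, so `⟪B X, Y⟫ = 0` and `B` is a multiple of the identity.
-/

open RealInnerProductSpace

theorem LinearMap.exists_inner_eq_zero_inner_apply_ne_zero {𝕜 V : Type*} [RCLike 𝕜]
    [NormedAddCommGroup V] [InnerProductSpace 𝕜 V] {A : V →ₗ[𝕜] V}
    (hA : ∀ a : 𝕜, A ≠ a • LinearMap.id) :
    ∃ X Y : V, inner 𝕜 X Y = 0 ∧ inner 𝕜 (A X) Y ≠ 0 := by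
  by_contra! hperp
  suffices hdep : ∀ v, ¬ LinearIndependent 𝕜 ![v, A v] by
    obtain ⟨a, ha⟩ := A.exists_eq_smul_id_of_forall_notLinearIndependent hdep
    exact hA a ha
  intro v
  have hmem : A v ∈ 𝕜 ∙ v := by
    rw [← (𝕜 ∙ v).orthogonal_orthogonal, Submodule.mem_orthogonal]
    intro u hu
    rw [Submodule.mem_orthogonal_singleton_iff_inner_right] at hu
    exact inner_eq_zero_symm.mp (hperp v u hu)
  obtain ⟨c, hc⟩ := Submodule.mem_span_singleton.mp hmem
  rw [LinearIndependent.pair_iff]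
  intro hind
  have := (hind c (-1) (by rw [hc, neg_one_smul, add_neg_cancel])).2
  norm_num at this

theorem LinearMap.exists_eq_smul_id_of_smul_add_smul_add_smul_id_eq_zero {V : Type*}
    [NormedAddCommGroup V] [InnerProductSpace ℝ V] {A B : V →ₗ[ℝ] V} {X Y : V} {c : ℝ}
    (hXY : ⟪X, Y⟫ = 0) (hAXY : ⟪A X, Y⟫ ≠ 0)
    (h : ⟪A X, Y⟫ • B + ⟪B X, Y⟫ • A + c • LinearMap.id = 0) :
    ∃ b : ℝ, B = b • LinearMap.id := by
  have hBXY : ⟪B X, Y⟫ = 0 := by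
    have hpair := congrArg (fun T : V →ₗ[ℝ] V => ⟪T X, Y⟫) h
    simp only [LinearMap.add_apply, LinearMap.smul_apply, LinearMap.id_apply,
      LinearMap.zero_apply, inner_add_left, real_inner_smul_left, hXY, inner_zero_left] at hpair
    have hprod : ⟪A X, Y⟫ * ⟪B X, Y⟫ = 0 := by linear_combination hpair / 2
    exact (mul_eq_zero.mp hprod).resolve_left hAXY
  refine ⟨-c / ⟪A X, Y⟫, ?_⟩
  rw [hBXY, zero_smul, add_zero, add_eq_zero_iff_eq_neg, ← neg_smul] at h
  rw [div_eq_inv_mul, ← smul_smul, ← h, smul_smul, inv_mul_cancel₀ hAXY, one_smul]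

theorem stmt0_general {V : Type*} [NormedAddCommGroup V] [InnerProductSpace ℝ V]
    (A B H : V →ₗ[ℝ] V)
    (hAni : ∀ a : ℝ, A ≠ a • LinearMap.id)
    (h : ∀ X Y : V, ⟪A X, Y⟫ • B + ⟪B X, Y⟫ • A + ⟪X, Y⟫ • H
        + ⟪H X, Y⟫ • (LinearMap.id : V →ₗ[ℝ] V) = 0) :
    ∃ b : ℝ, B = b • LinearMap.id := by
  obtain ⟨X, Y, hXY, hAXY⟩ := LinearMap.exists_inner_eq_zero_inner_apply_ne_zero hAni
  have hXY' := h X Y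
  rw [hXY, zero_smul, add_zero] at hXY'
  exact LinearMap.exists_eq_smul_id_of_smul_add_smul_add_smul_id_eq_zero hXY hAXY hXY'

theorem stmt0 {V : Type*} [NormedAddCommGroup V] [InnerProductSpace ℝ V]
    [FiniteDimensional ℝ V] (hdim : 2 ≤ Module.finrank ℝ V)
    (A B H : V →ₗ[ℝ] V)
    (hA : A.IsSymmetric) (hB : B.IsSymmetric) (hH : H.IsSymmetric)
    (hAni : ∀ a : ℝ, A ≠ a • LinearMap.id)
    (h : ∀ X Y : V, ⟪A X, Y⟫ • B + ⟪B X, Y⟫ • A + ⟪X, Y⟫ • H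
        + ⟪H X, Y⟫ • (LinearMap.id : V →ₗ[ℝ] V) = 0) :
    ∃ b : ℝ, B = b • LinearMap.id :=
  stmt0_general A B H hAni h
end

section
/- Let U ⊆ ℝ² be open, and let μ, F, φ : U → ℝ be smooth with μ > 0 everywhere. Set ψ = √μ · φ and M = F − (μ_{uu} + μ_{vv})/(8μ) + (μ_u² + μ_v²)/(16μ²). Then φ satisfies φ_{uu} + φ_{vv} + (μ_u φ_u + μ_v φ_v)/μ + 4Fφ = 0 on U if and only if ψ satisfies ψ_{uu} + ψ_{vv} + 4Mψ = 0 on U. -/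
/-- Partial derivative in the `u` direction on `ℝ × ℝ`. -/
noncomputable def pdu (g : ℝ × ℝ → ℝ) : ℝ × ℝ → ℝ :=
  fun x => fderiv ℝ g x (1, 0)

/-- Partial derivative in the `v` direction on `ℝ × ℝ`. -/
noncomputable def pdv (g : ℝ × ℝ → ℝ) : ℝ × ℝ → ℝ :=
  fun x => fderiv ℝ g x (0, 1)

/-- Directional partial derivative. -/
noncomputable def pd (w : ℝ × ℝ) (g : ℝ × ℝ → ℝ) : ℝ × ℝ → ℝ :=
  fun x => fderiv ℝ g x w

lemma pdu_eq_pd : pdu = pd (1, 0) := rfl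
lemma pdv_eq_pd : pdv = pd (0, 1) := rfl

lemma pd_congr {f g : ℝ × ℝ → ℝ} {U : Set (ℝ × ℝ)} (hU : IsOpen U) {x : ℝ × ℝ}
    (hx : x ∈ U) (h : ∀ y ∈ U, f y = g y) (w : ℝ × ℝ) : pd w f x = pd w g x := by
  have he : f =ᶠ[nhds x] g := Filter.eventuallyEq_of_mem (hU.mem_nhds hx) h
  unfold pd
  rw [he.fderiv_eq]

lemma pd_add {f g : ℝ × ℝ → ℝ} {x : ℝ × ℝ} (hf : DifferentiableAt ℝ f x)
    (hg : DifferentiableAt ℝ g x) (w : ℝ × ℝ) :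
    pd w (fun y => f y + g y) x = pd w f x + pd w g x := by
  unfold pd
  rw [fderiv_fun_add hf hg]
  simp

lemma pd_mul {f g : ℝ × ℝ → ℝ} {x : ℝ × ℝ} (hf : DifferentiableAt ℝ f x)
    (hg : DifferentiableAt ℝ g x) (w : ℝ × ℝ) :
    pd w (fun y => f y * g y) x = pd w f x * g x + f x * pd w g x := by
  unfold pd
  rw [fderiv_fun_mul hf hg]
  simp only [ContinuousLinearMap.add_apply, ContinuousLinearMap.smul_apply, smul_eq_mul]
  ring

lemma pd_inv {f : ℝ × ℝ → ℝ} {x : ℝ × ℝ} (hf : DifferentiableAt ℝ f x)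
    (hfx : f x ≠ 0) (w : ℝ × ℝ) :
    pd w (fun y => (f y)⁻¹) x = -pd w f x / (f x) ^ 2 := by
  have h : HasFDerivAt (fun y => (f y)⁻¹) ((-((f x) ^ 2)⁻¹) • fderiv ℝ f x) x :=
    (hasDerivAt_inv hfx).comp_hasFDerivAt x hf.hasFDerivAt
  unfold pd
  rw [h.fderiv]
  simp [div_eq_mul_inv, mul_comm]

lemma diffAt_div {f g : ℝ × ℝ → ℝ} {x : ℝ × ℝ} (hf : DifferentiableAt ℝ f x)
    (hg : DifferentiableAt ℝ g x) (hgx : g x ≠ 0) :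
    DifferentiableAt ℝ (fun y => f y / g y) x := by
  simp only [div_eq_mul_inv]
  exact hf.mul (hg.inv hgx)

lemma pd_div {f g : ℝ × ℝ → ℝ} {x : ℝ × ℝ} (hf : DifferentiableAt ℝ f x)
    (hg : DifferentiableAt ℝ g x) (hgx : g x ≠ 0) (w : ℝ × ℝ) :
    pd w (fun y => f y / g y) x = (pd w f x * g x - f x * pd w g x) / (g x) ^ 2 := by
  have h1 : pd w (fun y => f y * (g y)⁻¹) x = pd w f x * (g x)⁻¹ + f x * pd w (fun y => (g y)⁻¹) x :=
    pd_mul hf (hg.inv hgx) w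
  have h2 := pd_inv hg hgx w
  have : (fun y => f y / g y) = fun y => f y * (g y)⁻¹ := by
    funext y; rw [div_eq_mul_inv]
  rw [this, h1, h2]
  field_simp
  ring

lemma pd_sqrt {f : ℝ × ℝ → ℝ} {x : ℝ × ℝ} (hf : DifferentiableAt ℝ f x)
    (hfx : f x ≠ 0) (w : ℝ × ℝ) :
    pd w (fun y => Real.sqrt (f y)) x = pd w f x / (2 * Real.sqrt (f x)) := by
  have h : HasFDerivAt (fun y => Real.sqrt (f y))
      ((1 / (2 * Real.sqrt (f x))) • fderiv ℝ f x) x :=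
    (Real.hasDerivAt_sqrt hfx).comp_hasFDerivAt x hf.hasFDerivAt
  unfold pd
  rw [h.fderiv]
  simp [div_eq_mul_inv, mul_comm]

lemma contDiffAt_pd {g : ℝ × ℝ → ℝ} {x : ℝ × ℝ} (h : ContDiffAt ℝ (⊤ : ℕ∞) g x) (w : ℝ × ℝ) :
    ContDiffAt ℝ (⊤ : ℕ∞) (pd w g) x := by
  have h1 : ContDiffAt ℝ (⊤ : ℕ∞) (fderiv ℝ g) x := h.fderiv_right (by simp)
  exact h1.clm_apply contDiffAt_const

theorem stmt6 (U : Set (ℝ × ℝ)) (hU : IsOpen U)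
    (μ F φ : ℝ × ℝ → ℝ)
    (hμ : ContDiffOn ℝ (⊤ : ℕ∞) μ U) (hF : ContDiffOn ℝ (⊤ : ℕ∞) F U) (hφ : ContDiffOn ℝ (⊤ : ℕ∞) φ U)
    (hμpos : ∀ x ∈ U, 0 < μ x)
    (ψ : ℝ × ℝ → ℝ) (hψ : ∀ x, ψ x = Real.sqrt (μ x) * φ x)
    (M : ℝ × ℝ → ℝ)
    (hM : ∀ x ∈ U, M x = F x - (pdu (pdu μ) x + pdv (pdv μ) x) / (8 * μ x)
        + ((pdu μ x)^2 + (pdv μ x)^2) / (16 * (μ x)^2)) :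
    (∀ x ∈ U, pdu (pdu φ) x + pdv (pdv φ) x
        + (pdu μ x * pdu φ x + pdv μ x * pdv φ x) / μ x + 4 * F x * φ x = 0)
      ↔ (∀ x ∈ U, pdu (pdu ψ) x + pdv (pdv ψ) x + 4 * M x * ψ x = 0) := by
  set s : ℝ × ℝ → ℝ := fun y => Real.sqrt (μ y) with hs_def
  -- basic regularity facts at points of U
  have cμ : ∀ y ∈ U, ContDiffAt ℝ (⊤ : ℕ∞) μ y := fun y hy => hμ.contDiffAt (hU.mem_nhds hy)
  have cφ : ∀ y ∈ U, ContDiffAt ℝ (⊤ : ℕ∞) φ y := fun y hy => hφ.contDiffAt (hU.mem_nhds hy)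
  have hμne : ∀ y ∈ U, μ y ≠ 0 := fun y hy => (hμpos y hy).ne'
  have cs : ∀ y ∈ U, ContDiffAt ℝ (⊤ : ℕ∞) s y := fun y hy =>
    (Real.contDiffAt_sqrt (hμne y hy)).comp y (cμ y hy)
  have dμ : ∀ y ∈ U, DifferentiableAt ℝ μ y := fun y hy => (cμ y hy).differentiableAt (by simp)
  have dφ : ∀ y ∈ U, DifferentiableAt ℝ φ y := fun y hy => (cφ y hy).differentiableAt (by simp)
  have ds : ∀ y ∈ U, DifferentiableAt ℝ s y := fun y hy => (cs y hy).differentiableAt (by simp)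
  have hsne : ∀ y ∈ U, s y ≠ 0 := fun y hy => (Real.sqrt_pos.2 (hμpos y hy)).ne'
  -- first derivative of ψ on U
  have hψfun : ψ = fun y => s y * φ y := funext hψ
  have step1 : ∀ (w : ℝ × ℝ), ∀ y ∈ U, pd w s y = pd w μ y / (2 * s y) := by
    intro w y hy
    exact pd_sqrt (dμ y hy) (hμne y hy) w
  have step2 : ∀ (w : ℝ × ℝ), ∀ y ∈ U,
      pd w ψ y = pd w μ y / (2 * s y) * φ y + s y * pd w φ y := by
    intro w y hy
    rw [hψfun, pd_mul (ds y hy) (dφ y hy) w, step1 w y hy]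
  -- second derivative: the key formula
  have step3 : ∀ (w : ℝ × ℝ), ∀ x ∈ U,
      pd w (pd w ψ) x =
        (pd w (pd w μ) x * (2 * s x) - pd w μ x * (2 * (pd w μ x / (2 * s x)))) / (2 * s x) ^ 2
            * φ x
          + pd w μ x / (2 * s x) * pd w φ x
          + (pd w μ x / (2 * s x) * pd w φ x + s x * pd w (pd w φ) x) := by
    intro w x hx
    have dpdμ : DifferentiableAt ℝ (pd w μ) x := (contDiffAt_pd (cμ x hx) w).differentiableAt (by simp)
    have dpdφ : DifferentiableAt ℝ (pd w φ) x := (contDiffAt_pd (cφ x hx) w).differentiableAt (by simp)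
    have d2s : DifferentiableAt ℝ (fun y => 2 * s y) x := (ds x hx).const_mul 2
    have h2sne : (2 : ℝ) * s x ≠ 0 := by
      have := hsne x hx; positivity
    have dq : DifferentiableAt ℝ (fun y => pd w μ y / (2 * s y)) x := diffAt_div dpdμ d2s h2sne
    have h1 : pd w (pd w ψ) x
        = pd w (fun y => pd w μ y / (2 * s y) * φ y + s y * pd w φ y) x :=
      pd_congr hU hx (step2 w) w
    rw [h1, pd_add (dq.fun_mul (dφ x hx)) ((ds x hx).fun_mul dpdφ) w,
      pd_mul dq (dφ x hx) w, pd_mul (ds x hx) dpdφ w,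
      pd_div dpdμ d2s h2sne w, step1 w x hx]
    have h2 : pd w (fun y => 2 * s y) x = 2 * pd w s x := by
      unfold pd
      rw [fderiv_const_mul (ds x hx) 2]
      simp
    rw [h2, step1 w x hx]
  -- the key pointwise identity
  have key : ∀ x ∈ U,
      pdu (pdu ψ) x + pdv (pdv ψ) x + 4 * M x * ψ x
        = s x * (pdu (pdu φ) x + pdv (pdv φ) x
            + (pdu μ x * pdu φ x + pdv μ x * pdv φ x) / μ x + 4 * F x * φ x) := by
    intro x hx
    have h1 := step3 (1, 0) x hx
    have h2 := step3 (0, 1) x hx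
    have hMx := hM x hx
    have hψx := hψ x
    rw [pdu_eq_pd, pdv_eq_pd] at *
    rw [h1, h2, hMx, hψx]
    set r : ℝ := Real.sqrt (μ x) with hr
    have hrs : s x = r := rfl
    have hr2 : r ^ 2 = μ x := Real.sq_sqrt (hμpos x hx).le
    have hrne : r ≠ 0 := hsne x hx
    rw [hrs, ← hr2]
    field_simp
    ring
  constructor
  · intro h x hx
    rw [key x hx, h x hx, mul_zero]
  · intro h x hx
    have hk := key x hx
    rw [h x hx] at hk
    rcases mul_eq_zero.1 hk.symm with h' | h'
    · exact absurd h' (hsne x hx)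
    · exact h'
end
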